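/- Define φ : ℝ³ → ℝ³ by φ(u,v,x) = ( u, v + (1/2)·x²·cos(u)·sin(u), x·sin(u) ). For a point q = (u,v,x) ∈ ℝ³ define the Brinkmann quadratic form B_q and the Rosen quadratic form R_q on tangent vectors (a,b,c) ∈ ℝ³ by B_{(u,v,x)}(a,b,c) = 2ab + x²·a² − c² and R_{(u,v,x)}(a,b,c) = 2ab − sin(u)²·c². Then φ is an isometric pullback: for every q = (u,v,x) ∈ ℝ³ and every (a,b,c) ∈ ℝ³, B_{φ(q)}( Dφ(q)(a,b,c) ) = R_q(a,b,c), where Dφ(q) is the (Fréchet) derivative of φ at q. -/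

import Mathlib

/-- The coordinate change `φ(u,v,x) = (u, v + (1/2)x² cos u sin u, x sin u)` from the
singular Rosen metric `2 du dv − sin²u dx²` to the Brinkmann metric `2 du dv + x²du² − dx²`. -/
noncomputable def rosenToBrinkmann : ℝ × ℝ × ℝ → ℝ × ℝ × ℝ :=
  fun q => (q.1, q.2.1 + (1/2) * q.2.2 ^ 2 * Real.cos q.1 * Real.sin q.1,
    q.2.2 * Real.sin q.1)

/-- The quadratic form of the Brinkmann plane-wave metric `2 du dv + x² du² − dx²` at the
point `q`, evaluated on the tangent vector `(a,b,c)`. -/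
def brinkmannForm (q w : ℝ × ℝ × ℝ) : ℝ :=
  2 * w.1 * w.2.1 + q.2.2 ^ 2 * w.1 ^ 2 - w.2.2 ^ 2

/-- The quadratic form of the singular Rosen metric `2 du dv − sin²u dx²` at the point `q`,
evaluated on the tangent vector `(a,b,c)`. -/
noncomputable def rosenForm (q w : ℝ × ℝ × ℝ) : ℝ :=
  2 * w.1 * w.2.1 - Real.sin q.1 ^ 2 * w.2.2 ^ 2

/-!
For any profile `g`, put `X = x g(u)` and `V = v + ½ x² g(u) g'(u)`. Then
`dX = x g' du + g dx` and `dV = dv + x g g' dx + ½ x² (g'² + g g'') du`, so in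
`2 dU dV + A(U) X² dU² − dX²` the `du dx` terms cancel and the coefficient of `du²` is
`x² g (g'' + A g)`. It vanishes when `g'' = −A g`, leaving the Rosen form `2 du dv − g² dx²`;
`g = sin` solves this with `A = 1`.
-/

noncomputable def rosenChart (g : ℝ → ℝ) : ℝ × ℝ × ℝ → ℝ × ℝ × ℝ :=
  fun q => (q.1, q.2.1 + 1 / 2 * q.2.2 ^ 2 * g q.1 * deriv g q.1, q.2.2 * g q.1)

def planeWaveForm (A : ℝ → ℝ) (q w : ℝ × ℝ × ℝ) : ℝ :=
  2 * w.1 * w.2.1 + A q.1 * q.2.2 ^ 2 * w.1 ^ 2 - w.2.2 ^ 2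

def rosenMetricForm (g : ℝ → ℝ) (q w : ℝ × ℝ × ℝ) : ℝ :=
  2 * w.1 * w.2.1 - g q.1 ^ 2 * w.2.2 ^ 2

theorem fderiv_rosenChart_apply {g : ℝ → ℝ} {g'' : ℝ} {q : ℝ × ℝ × ℝ}
    (hg : DifferentiableAt ℝ g q.1) (hg' : HasDerivAt (deriv g) g'' q.1) (w : ℝ × ℝ × ℝ) :
    fderiv ℝ (rosenChart g) q w =
      (w.1, w.2.1 + q.2.2 * g q.1 * deriv g q.1 * w.2.2
          + 1 / 2 * q.2.2 ^ 2 * (deriv g q.1 ^ 2 + g q.1 * g'') * w.1,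
        g q.1 * w.2.2 + q.2.2 * deriv g q.1 * w.1) := by
  have hu : HasFDerivAt (fun p : ℝ × ℝ × ℝ => p.1) (ContinuousLinearMap.fst ℝ ℝ (ℝ × ℝ)) q :=
    hasFDerivAt_fst
  have hv : HasFDerivAt (fun p : ℝ × ℝ × ℝ => p.2.1)
      ((ContinuousLinearMap.fst ℝ ℝ ℝ).comp (ContinuousLinearMap.snd ℝ ℝ (ℝ × ℝ))) q :=
    hasFDerivAt_fst.comp q hasFDerivAt_snd
  have hx : HasFDerivAt (fun p : ℝ × ℝ × ℝ => p.2.2)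
      ((ContinuousLinearMap.snd ℝ ℝ ℝ).comp (ContinuousLinearMap.snd ℝ ℝ (ℝ × ℝ))) q :=
    hasFDerivAt_snd.comp q hasFDerivAt_snd
  have hgu := hg.hasDerivAt.comp_hasFDerivAt q hu
  have hg'u := hg'.comp_hasFDerivAt q hu
  have hφ := hu.prodMk ((hv.add (((hx.pow 2).const_mul (1 / 2)).mul hgu |>.mul hg'u)).prodMk
    (hx.mul hgu))
  rw [hφ.fderiv (f := rosenChart g)]
  simp only [Pi.mul_apply, Function.comp_apply, ContinuousLinearMap.prod_apply,
    ContinuousLinearMap.coe_fst', add_apply, ContinuousLinearMap.comp_apply,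
    ContinuousLinearMap.coe_snd', smul_apply, smul_eq_mul, nsmul_eq_mul,
    Prod.mk.injEq, true_and]
  constructor <;> ring

theorem planeWaveForm_rosenChart {g A : ℝ → ℝ} {q : ℝ × ℝ × ℝ} (hg : DifferentiableAt ℝ g q.1)
    (hg' : HasDerivAt (deriv g) (-(A q.1 * g q.1)) q.1) (w : ℝ × ℝ × ℝ) :
    planeWaveForm A (rosenChart g q) (fderiv ℝ (rosenChart g) q w) = rosenMetricForm g q w := by
  rw [fderiv_rosenChart_apply hg hg', planeWaveForm, rosenMetricForm, rosenChart]
  ring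

theorem rosenChart_sin : rosenChart Real.sin = rosenToBrinkmann := by
  funext q
  simp only [rosenChart, rosenToBrinkmann, Real.deriv_sin, Prod.mk.injEq, true_and, and_true]
  ring

theorem brinkmannForm_eq_planeWaveForm : brinkmannForm = planeWaveForm fun _ => 1 := by
  ext q w
  simp only [brinkmannForm, planeWaveForm, one_mul]

theorem rosenForm_eq_rosenMetricForm : rosenForm = rosenMetricForm Real.sin := rfl

/-- the map `φ(u,v,x) = (u, v + (1/2)x² cos u sin u, x sin u)` pulls the
Brinkmann quadratic form back to the singular Rosen quadratic form:
`B_{φ(q)}(Dφ(q)w) = R_q(w)` for all `q, w ∈ ℝ³`. -/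
theorem rosen_to_brinkmann_isometric_pullback (q w : ℝ × ℝ × ℝ) :
    brinkmannForm (rosenToBrinkmann q) (fderiv ℝ rosenToBrinkmann q w) = rosenForm q w := by
  have hsin'' : HasDerivAt (deriv Real.sin) (-(1 * Real.sin q.1)) q.1 := by
    simpa only [Real.deriv_sin, one_mul] using Real.hasDerivAt_cos q.1
  rw [← rosenChart_sin, brinkmannForm_eq_planeWaveForm, rosenForm_eq_rosenMetricForm]
  exact planeWaveForm_rosenChart Real.differentiableAt_sin hsin'' w
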